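/- arXiv:math/0310168 — 4 statements merged into one kernel-verified Lean document; each statement's English description precedes it below -/
import Mathlib

section
/- Let f be a Laurent polynomial in n variables and A a vertex of its Newton polytope, so f = λ_A t^A (1 − h) with λ_A ≠ 0. Then for every monomial t^m, only finitely many of the powers hⁱ contain t^m with nonzero coefficient; hence the series λ_A⁻¹ t^{−A}(1 + h + h² + ⋯) is a well-defined formal power series (the Laurent expansion of 1/f at the vertex A). -/
/-- A Laurent polynomial in `n` variables: an element of the monoid algebra of `ℂ`
over the lattice `ℤⁿ` of exponents; its value at `k` is the coefficient of `tᵏ`. -/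
noncomputable abbrev MvLaurent (n : ℕ) := AddMonoidAlgebra ℂ (Fin n → ℤ)

/-- The Newton polytope of a Laurent polynomial: the convex hull in ℝⁿ of its
exponents with nonzero coefficient. -/
noncomputable def newtonPolytope {n : ℕ} (f : MvLaurent n) : Set (Fin n → ℝ) :=
  convexHull ℝ ((fun k : Fin n → ℤ => fun i => (k i : ℝ)) '' ↑f.coeff.support)

/-!
Since `A` is a vertex, a linear functional `ℓ` separates it strictly from the other exponents
of `f`, so `ℓ ≥ δ > 0` on every exponent of `h`. As `ℓ` is additive, every exponent of `hⁱ`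
then has `ℓ`-value at least `i δ`, and a fixed monomial `tᵐ` can only occur in `hⁱ` for
`i ≤ ℓ(m) / δ`.
-/

open AddMonoidAlgebra

theorem Set.Finite.exists_strongDual_add_le_of_mem_extremePoints_convexHull
    {E : Type*} [AddCommGroup E] [Module ℝ E] [TopologicalSpace E] [T2Space E]
    [IsTopologicalAddGroup E] [ContinuousSMul ℝ E] [LocallyConvexSpace ℝ E]
    {S : Set E} (hS : S.Finite) {x : E} (hx : x ∈ (convexHull ℝ S).extremePoints ℝ) :
    ∃ ℓ : StrongDual ℝ E, ∃ δ > 0, ∀ y ∈ S, y ≠ x → ℓ x + δ ≤ ℓ y := by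
  have hx_notMem : x ∉ convexHull ℝ (S \ {x}) := fun hmem =>
    ((convex_convexHull ℝ S).mem_extremePoints_iff_mem_sdiff_convexHull_sdiff.mp hx).2 <|
      convexHull_mono (Set.sdiff_subset_sdiff_left (subset_convexHull ℝ S)) hmem
  obtain ⟨ℓ, u, hxu, hu⟩ := geometric_hahn_banach_point_closed (convex_convexHull ℝ _)
    (hS.sdiff.isClosed_convexHull ℝ) hx_notMem
  refine ⟨ℓ, u - ℓ x, sub_pos.mpr hxu, fun y hy hyx => ?_⟩
  have := hu y (subset_convexHull ℝ _ ⟨hy, hyx⟩)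
  linarith

namespace AddMonoidAlgebra

variable {R M Γ : Type*} [Semiring R] [AddMonoid M]

theorem nsmul_le_of_mem_support_pow [AddCommMonoid Γ] [PartialOrder Γ] [IsOrderedAddMonoid Γ]
    (φ : M →+ Γ) {δ : Γ} {h : R[M]} (hh : ∀ k ∈ h.coeff.support, δ ≤ φ k) :
    ∀ (i : ℕ), ∀ m ∈ (h ^ i).coeff.support, i • δ ≤ φ m := by
  classical
  intro i
  induction i with
  | zero =>
    intro m hm
    rw [pow_zero] at hm
    rw [Finset.mem_singleton.mp (support_coeff_one_subset hm), zero_smul, map_zero]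
  | succ i ih =>
    intro m hm
    rw [pow_succ] at hm
    obtain ⟨a, ha, b, hb, rfl⟩ := Finset.mem_add.mp (support_coeff_mul_subset _ _ hm)
    rw [succ_nsmul, map_add]
    exact add_le_add (ih a ha) (hh b hb)

theorem finite_setOf_coeff_pow_ne_zero (φ : M →+ ℝ) {δ : ℝ} (hδ : 0 < δ) {h : R[M]}
    (hh : ∀ k ∈ h.coeff.support, δ ≤ φ k) (m : M) :
    {i : ℕ | (h ^ i).coeff m ≠ 0}.Finite := by
  refine (Set.finite_Iic ⌈φ m / δ⌉₊).subset fun i hi => ?_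
  have hiδ : (i : ℝ) * δ ≤ φ m := by
    simpa only [nsmul_eq_mul] using
      nsmul_le_of_mem_support_pow φ hh i m (Finsupp.mem_support_iff.mpr hi)
  exact Nat.cast_le.mp <| ((le_div_iff₀ hδ).mpr hiδ).trans (Nat.le_ceil _)

end AddMonoidAlgebra

/-- Let `f` be a Laurent polynomial in `n` variables and `A` a vertex (extreme point)
of its Newton polytope, and write `f = λ_A t^A (1 − h)`, i.e.
`h = 1 − (λ_A)⁻¹ t^(−A) f` (so `h k = −(λ_A)⁻¹ · f(k+A)` for `k ≠ 0` and `h 0 = 0`).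
Then for every monomial `tᵐ`, only finitely many powers `hⁱ` contain `tᵐ` with a
nonzero coefficient; hence `λ_A⁻¹ t^(−A)(1 + h + h² + ⋯)` is a well-defined formal
power series (the Laurent expansion of `1/f` at the vertex `A`). -/
theorem laurent_expansion_at_vertex_well_defined {n : ℕ}
    (f : MvLaurent n) (A : Fin n → ℤ)
    (hA : (fun i => (A i : ℝ)) ∈ Set.extremePoints ℝ (newtonPolytope f))
    (h : MvLaurent n)
    (hdef : ∀ k : Fin n → ℤ, h.coeff k = if k = 0 then 0 else -(f.coeff A)⁻¹ * f.coeff (k + A)) :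
    ∀ m : Fin n → ℤ, {i : ℕ | (h ^ i).coeff m ≠ 0}.Finite := by
  let c : (Fin n → ℤ) →+ (Fin n → ℝ) := (Int.castAddHom ℝ).compLeft (Fin n)
  have hc : Function.Injective c := Int.cast_injective.comp_left
  obtain ⟨ℓ, δ, hδ, hℓ⟩ :=
    (f.coeff.support.finite_toSet.image c).exists_strongDual_add_le_of_mem_extremePoints_convexHull
      (x := c A) hA
  refine finite_setOf_coeff_pow_ne_zero (ℓ.toLinearMap.toAddMonoidHom.comp c) hδ fun k hk => ?_
  rw [Finsupp.mem_support_iff, hdef k] at hk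
  have hk0 : k ≠ 0 := fun h0 => hk (if_pos h0)
  have hfk : f.coeff (k + A) ≠ 0 := fun h0 => hk (by simp [h0])
  have hkA : c (k + A) ≠ c A := fun heq => hk0 (by simpa using hc heq)
  have hsep := hℓ _ (Set.mem_image_of_mem c (Finsupp.mem_support_iff.mpr hfk)) hkA
  rw [map_add, map_add] at hsep
  change δ ≤ ℓ (c k)
  linarith
end

section
/- The Newton polytope of a product of Laurent polynomials f₁⋯fₙ (with all fᵢ nonzero) equals the Minkowski sum of the Newton polytopes of f₁,…,fₙ. -/
/-!
The inclusion `N(fg) ⊆ N(f) + N(g)` holds because every exponent of `fg` is a sum of exponents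
of `f` and `g`. Conversely, `N(f) + N(g)` is the convex hull of the finite set `A + B` of sums of
exponents, hence (Krein–Milman) of its vertices. A vertex `v` of a Minkowski sum decomposes
uniquely as `v = a + b` with `a ∈ A`, `b ∈ B`, so the coefficient of `tᵛ` in `fg` is the single
product `f_a g_b ≠ 0`, and `v` is an exponent of `fg`.
-/

open Pointwise

section ExtremePoints

variable {𝕜 E : Type*} [Field 𝕜] [LinearOrder 𝕜] [IsStrictOrderedRing 𝕜]
  [AddCommGroup E] [Module 𝕜 E] [DecidableEq E]

/-- If `a + b = x + y` in `s + t`, then `x + y` is the midpoint of `a + y` and `x + b`, which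
also lie in `s + t`; extremality forces `a + y = x + y = x + b`. -/
theorem uniqueAdd_of_add_mem_extremePoints {s t : Finset E} {x y : E} (hx : x ∈ s) (hy : y ∈ t)
    (hxy : x + y ∈ (↑(s + t) : Set E).extremePoints 𝕜) : UniqueAdd s t x y := by
  intro a b ha hb hab
  have hmid : x + y ∈ openSegment 𝕜 (a + y) (x + b) := by
    refine ⟨1 / 2, 1 / 2, one_half_pos, one_half_pos, add_halves 1, ?_⟩
    have hsum : a + y + (x + b) = (2 : 𝕜) • (x + y) :=
      calc a + y + (x + b) = a + b + (x + y) := by abel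
        _ = (2 : 𝕜) • (x + y) := by rw [hab, two_smul]
    rw [← smul_add, hsum, smul_smul]
    norm_num
  obtain ⟨hay, hxb⟩ := (mem_extremePoints.1 hxy).2 _ (Finset.add_mem_add ha hy) _
    (Finset.add_mem_add hx hb) hmid
  exact ⟨add_right_cancel hay, add_left_cancel hxb⟩

theorem AddMonoidAlgebra.extremePoints_convexHull_subset_image_support_mul {R G : Type*}
    [Semiring R] [NoZeroDivisors R] [Add G] (φ : G →ₙ+ E) (hφ : Function.Injective φ)
    (f g : AddMonoidAlgebra R G) :
    (convexHull 𝕜 (↑(f.coeff.support.image φ + g.coeff.support.image φ) : Set E)).extremePoints 𝕜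
      ⊆ φ '' (f * g).coeff.support := by
  intro v hv
  have hvAB : v ∈ f.coeff.support.image φ + g.coeff.support.image φ :=
    extremePoints_convexHull_subset hv
  have hext := inter_extremePoints_subset_extremePoints_of_subset (subset_convexHull 𝕜 _) ⟨hvAB, hv⟩
  obtain ⟨x, hx, y, hy, rfl⟩ := Finset.mem_add.1 hvAB
  obtain ⟨a, ha, rfl⟩ := Finset.mem_image.1 hx
  obtain ⟨b, hb, rfl⟩ := Finset.mem_image.1 hy
  have huniq : UniqueAdd f.coeff.support g.coeff.support a b :=
    (UniqueAdd.addHom_image_iff φ hφ).1 (uniqueAdd_of_add_mem_extremePoints hx hy hext)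
  refine ⟨a + b, ?_, map_add φ a b⟩
  rw [SetLike.mem_coe, Finsupp.mem_support_iff, coeff_mul_add_of_uniqueAdd huniq]
  exact mul_ne_zero (Finsupp.mem_support_iff.1 ha) (Finsupp.mem_support_iff.1 hb)

end ExtremePoints

theorem Set.Finite.convexHull_extremePoints_convexHull {E : Type*} [AddCommGroup E] [Module ℝ E]
    [TopologicalSpace E] [T2Space E] [IsTopologicalAddGroup E] [ContinuousSMul ℝ E]
    [LocallyConvexSpace ℝ E] {s : Set E} (hs : s.Finite) :
    convexHull ℝ ((convexHull ℝ s).extremePoints ℝ) = convexHull ℝ s := by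
  have hfin : ((convexHull ℝ s).extremePoints ℝ).Finite := hs.subset extremePoints_convexHull_subset
  rw [← (hfin.isClosed_convexHull ℝ).closure_eq]
  exact closure_convexHull_extremePoints (hs.isCompact_convexHull ℝ) (convex_convexHull ℝ s)

theorem AddMonoidAlgebra.convexHull_image_support_mul {R G E : Type*} [Semiring R]
    [NoZeroDivisors R] [Add G] [AddCommGroup E] [Module ℝ E] [TopologicalSpace E] [T2Space E]
    [IsTopologicalAddGroup E] [ContinuousSMul ℝ E] [LocallyConvexSpace ℝ E]
    (φ : G →ₙ+ E) (hφ : Function.Injective φ) (f g : AddMonoidAlgebra R G) :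
    convexHull ℝ (φ '' (f * g).coeff.support) =
      convexHull ℝ (φ '' f.coeff.support) + convexHull ℝ (φ '' g.coeff.support) := by
  classical
  have hsum : convexHull ℝ (φ '' f.coeff.support) + convexHull ℝ (φ '' g.coeff.support) =
      convexHull ℝ ↑(f.coeff.support.image φ + g.coeff.support.image φ) := by
    rw [Finset.coe_add, convexHull_add, Finset.coe_image, Finset.coe_image]
  rw [hsum]
  refine subset_antisymm (convexHull_mono ?_) ?_
  · rintro _ ⟨k, hk, rfl⟩
    obtain ⟨a, ha, b, hb, rfl⟩ := Finset.mem_add.1 (support_coeff_mul_subset f g hk)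
    rw [map_add]
    exact Finset.add_mem_add (Finset.mem_image_of_mem φ ha) (Finset.mem_image_of_mem φ hb)
  · rw [← Set.Finite.convexHull_extremePoints_convexHull (Finset.finite_toSet _)]
    exact convexHull_mono (extremePoints_convexHull_subset_image_support_mul φ hφ f g)

theorem newtonPolytope_mul {n : ℕ} (f g : MvLaurent n) :
    newtonPolytope (f * g) = newtonPolytope f + newtonPolytope g :=
  AddMonoidAlgebra.convexHull_image_support_mul
    (AddMonoidHom.compLeft (Int.castAddHom ℝ) (Fin n)).toAddHom
    (fun _ _ h ↦ funext fun i ↦ Int.cast_injective (congrFun h i)) f g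

theorem newtonPolytope_one {n : ℕ} : newtonPolytope (1 : MvLaurent n) = 0 := by
  simp [newtonPolytope, AddMonoidAlgebra.support_coeff_one, ← Pi.zero_def, Set.singleton_zero]

open Pointwise in
theorem newtonPolytope_prod_general {n N : ℕ} (f : Fin N → MvLaurent n) :
    newtonPolytope (∏ i, f i) = ∑ i, newtonPolytope (f i) := by
  induction N with
  | zero => simp [newtonPolytope_one]
  | succ N ih => rw [Fin.prod_univ_succ, Fin.sum_univ_succ, newtonPolytope_mul, ih]

open Pointwise in
/-- The Newton polytope of a product of nonzero Laurent polynomials equals the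
Minkowski sum of their Newton polytopes. -/
theorem newtonPolytope_prod {n N : ℕ} (f : Fin N → MvLaurent n)
    (hf : ∀ i, f i ≠ 0) :
    newtonPolytope (∏ i, f i) = ∑ i, newtonPolytope (f i) :=
  newtonPolytope_prod_general f
end

section
/- Let Δ₁,…,Δₙ be convex polytopes in ℝⁿ in generic relative position and χ : Δ → ℝⁿ a characteristic map on the Minkowski sum Δ. Then χ⁻¹(0) is exactly the set of vertices of Δ. -/
open Pointwise

/-- A (nonempty) convex polytope in ℝⁿ: the convex hull of a nonempty finite set. -/
def IsPolytope {n : ℕ} (P : Set (Fin n → ℝ)) : Prop :=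
  ∃ S : Finset (Fin n → ℝ), S.Nonempty ∧ P = convexHull ℝ (S : Set (Fin n → ℝ))

/-- The face of `P` on which the linear functional `ξ` attains its minimum. -/
def minFace {n : ℕ} (ξ : (Fin n → ℝ) →ₗ[ℝ] ℝ) (P : Set (Fin n → ℝ)) :
    Set (Fin n → ℝ) :=
  {x ∈ P | ∀ y ∈ P, ξ x ≤ ξ y}

/-- `F` is a face of the polytope `P`. -/
def IsFaceOf {n : ℕ} (F P : Set (Fin n → ℝ)) : Prop :=
  ∃ ξ : (Fin n → ℝ) →ₗ[ℝ] ℝ, F = minFace ξ P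

/-- Generic relative position: for every nonzero linear functional, some minimizing
face is a vertex. -/
def GenericPosition {n : ℕ} (Δ : Fin n → Set (Fin n → ℝ)) : Prop :=
  ∀ ξ : (Fin n → ℝ) →ₗ[ℝ] ℝ, ξ ≠ 0 → ∃ i v, minFace ξ (Δ i) = {v}

/-- The `i`-th summand of the face `Γ` of the Minkowski sum `Δ₁ + ⋯ + Δₙ` (in the
unique decomposition of `Γ` into faces of the `Δⱼ`) is a vertex. -/
def SummandIsVertex {n : ℕ} (Δ : Fin n → Set (Fin n → ℝ)) (i : Fin n)
    (Γ : Set (Fin n → ℝ)) : Prop :=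
  ∃ G : Fin n → Set (Fin n → ℝ),
    (∀ j, IsFaceOf (G j) (Δ j)) ∧ Γ = ∑ j, G j ∧ ∃ v, G i = {v}

/-- A characteristic map for the tuple `Δ₁,…,Δₙ`: a continuous map on the Minkowski
sum `Δ` with nonnegative components, whose `i`-th component vanishes precisely on the
faces of `Δ` whose `i`-th summand is a vertex. -/
def IsCharacteristic {n : ℕ} (Δ : Fin n → Set (Fin n → ℝ))
    (χ : (Fin n → ℝ) → (Fin n → ℝ)) : Prop :=
  ContinuousOn χ (∑ j, Δ j) ∧
  (∀ x ∈ ∑ j, Δ j, ∀ i, 0 ≤ χ x i) ∧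
  ∀ i, ∀ x ∈ ∑ j, Δ j,
    (χ x i = 0 ↔ ∃ Γ, IsFaceOf Γ (∑ j, Δ j) ∧ SummandIsVertex Δ i Γ ∧ x ∈ Γ)

/-! A point `x = ∑ gⱼ` of `Δ` with `χ x = 0` lies, for each `i`, in a face `minFace ξᵢ Δ` whose
`i`-th summand is a vertex. Cancelling bounded summands shows that this vertex is all of
`minFace ξᵢ Δᵢ`, i.e. `gᵢ` is the unique minimizer of `ξᵢ` on `Δᵢ`. Since every `gⱼ` minimizes every
`ξᵢ`, the functional `∑ ξᵢ` is minimized on `Δⱼ` exactly at `gⱼ`, hence on `Δ` exactly at `x`.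
Conversely, the face of `Δ` at a vertex is a sum of vertices of the `Δᵢ`, so every component of `χ`
vanishes there. -/

open Bornology

section PointwiseSets

theorem isBounded_finsetSum {ι E : Type*} [AddCommMonoid E] [Bornology E] [BoundedAdd E]
    {s : Finset ι} {F : ι → Set E} (h : ∀ i ∈ s, IsBounded (F i)) :
    IsBounded (∑ i ∈ s, F i) := by
  classical
  induction s using Finset.induction_on with
  | empty => simp [← Set.singleton_zero]
  | insert i s hi ih =>
    rw [Finset.sum_insert hi]
    exact isBounded_add (h i (s.mem_insert_self i))
      (ih fun j hj => h j (Finset.mem_insert_of_mem hj))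

theorem subsingleton_of_sum_subsingleton {ι E : Type*} [Fintype ι] [AddCancelCommMonoid E]
    {F : ι → Set E} (hF : ∀ j, (F j).Nonempty) (h : (∑ j, F j).Subsingleton) (i : ι) :
    (F i).Subsingleton := by
  classical
  choose w hw using hF
  rw [← Finset.add_sum_erase _ _ (Finset.mem_univ i)] at h
  have hm := Set.finsetSum_mem_finsetSum (Finset.univ.erase i) F w fun j _ => hw j
  exact fun a ha b hb => add_right_cancel (h (Set.add_mem_add ha hm) (Set.add_mem_add hb hm))

variable {E : Type*} [NormedAddCommGroup E] [NormedSpace ℝ E]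

theorem eq_of_vadd_set_subset_vadd_set {a b : E} {M : Set E} (hM : M.Nonempty)
    (hMb : IsBounded M) (h : a +ᵥ M ⊆ b +ᵥ M) : a = b := by
  obtain ⟨m, hm⟩ := hM
  obtain ⟨C, hC⟩ := hMb.exists_norm_le
  have hiter : ∀ k : ℕ, k • (a - b) + m ∈ M := by
    intro k
    induction k with
    | zero => simpa using hm
    | succ k ih =>
      obtain ⟨m', hm', hm'eq⟩ := h (Set.vadd_mem_vadd_set (a := a) ih)
      convert hm' using 1
      simp only [vadd_eq_add] at hm'eq
      rw [succ_nsmul]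
      linear_combination (norm := module) -hm'eq
  have hbound : ∀ k : ℕ, k * ‖a - b‖ ≤ 2 * C := fun k =>
    calc (k : ℝ) * ‖a - b‖ = ‖(k • (a - b) + m) - m‖ := by
          simp [← Nat.cast_smul_eq_nsmul ℝ, norm_smul]
      _ ≤ ‖k • (a - b) + m‖ + ‖m‖ := norm_sub_le _ _
      _ ≤ 2 * C := by linarith [hC _ (hiter k), hC m hm]
  by_contra hab
  have hpos : 0 < ‖a - b‖ := norm_pos_iff.2 (sub_ne_zero.2 hab)
  obtain ⟨k, hk⟩ := exists_nat_gt (2 * C / ‖a - b‖)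
  exact (hbound k).not_gt ((div_lt_iff₀ hpos).1 hk)

theorem eq_singleton_of_sum_eq_sum_of_subset {ι : Type*} [Fintype ι] {F G : ι → Set E}
    (hGF : ∀ j, G j ⊆ F j) (hF : ∀ j, (F j).Nonempty) (hFb : ∀ j, IsBounded (F j))
    (hsum : ∑ j, F j = ∑ j, G j) {i : ι} {v : E} (hGi : G i = {v}) : F i = {v} := by
  classical
  set M := ∑ j ∈ Finset.univ.erase i, F j
  choose w hw using hF
  have hMne : M.Nonempty := ⟨_, Set.finsetSum_mem_finsetSum _ F w fun j _ => hw j⟩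
  have hMb : IsBounded M := isBounded_finsetSum fun j _ => hFb j
  refine Set.eq_singleton_iff_unique_mem.2 ⟨hGF i (hGi ▸ rfl), fun f hf => ?_⟩
  refine eq_of_vadd_set_subset_vadd_set hMne hMb ?_
  calc f +ᵥ M ⊆ F i + M := Set.vadd_set_subset_add hf
    _ = ∑ j, G j := by rw [Finset.add_sum_erase _ _ (Finset.mem_univ i), hsum]
    _ = v +ᵥ ∑ j ∈ Finset.univ.erase i, G j := by
      rw [← Finset.add_sum_erase _ _ (Finset.mem_univ i), hGi, Set.singleton_add]
      rfl
    _ ⊆ v +ᵥ M := Set.vadd_set_mono (Set.finsetSum_subset_finsetSum _ _ _ fun j _ => hGF j)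

end PointwiseSets

section MinFace

variable {n : ℕ} {ι : Type*} [Fintype ι]

theorem minFace_subset (ξ : (Fin n → ℝ) →ₗ[ℝ] ℝ) (P : Set (Fin n → ℝ)) : minFace ξ P ⊆ P :=
  fun _ hx => hx.1

theorem IsPolytope.isCompact {P : Set (Fin n → ℝ)} (hP : IsPolytope P) : IsCompact P := by
  obtain ⟨S, -, rfl⟩ := hP
  exact S.finite_toSet.isCompact_convexHull ℝ

theorem IsPolytope.nonempty {P : Set (Fin n → ℝ)} (hP : IsPolytope P) : P.Nonempty := by
  obtain ⟨S, hS, rfl⟩ := hP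
  exact (Finset.coe_nonempty.2 hS).mono (subset_convexHull ℝ _)

theorem IsPolytope.minFace_nonempty {P : Set (Fin n → ℝ)} (hP : IsPolytope P)
    (ξ : (Fin n → ℝ) →ₗ[ℝ] ℝ) : (minFace ξ P).Nonempty := by
  obtain ⟨x, hx, hmin⟩ := hP.isCompact.exists_isMinOn hP.nonempty
    (LinearMap.continuous_of_finiteDimensional ξ).continuousOn
  exact ⟨x, hx, fun y hy => hmin hy⟩

theorem IsFaceOf.subset {F P : Set (Fin n → ℝ)} (hF : IsFaceOf F P) : F ⊆ P := by
  obtain ⟨ξ, rfl⟩ := hF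
  exact minFace_subset ξ P

theorem IsFaceOf.nonempty {F P : Set (Fin n → ℝ)} (hF : IsFaceOf F P) (hP : IsPolytope P) :
    F.Nonempty := by
  obtain ⟨ξ, rfl⟩ := hF
  exact hP.minFace_nonempty ξ

theorem mem_minFace_of_sum_mem_minFace {ξ : (Fin n → ℝ) →ₗ[ℝ] ℝ} {Δ : ι → Set (Fin n → ℝ)}
    {g : ι → Fin n → ℝ} (hg : ∀ j, g j ∈ Δ j) (hx : ∑ j, g j ∈ minFace ξ (∑ j, Δ j)) (j : ι) :
    g j ∈ minFace ξ (Δ j) := by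
  classical
  refine ⟨hg j, fun y hy => ?_⟩
  have hupdate : ∀ k, Function.update g j y k ∈ Δ k := by
    intro k
    rcases eq_or_ne k j with rfl | hk
    · simpa using hy
    · simpa [hk] using hg k
  have hle := hx.2 _ ((Set.mem_fintype_sum _ _).2 ⟨_, hupdate, rfl⟩)
  rw [Finset.sum_update_of_mem (Finset.mem_univ j),
    Finset.sum_eq_add_sum_sdiff_singleton_of_mem (Finset.mem_univ j), map_add, map_add] at hle
  linarith

theorem minFace_sum (ξ : (Fin n → ℝ) →ₗ[ℝ] ℝ) (Δ : ι → Set (Fin n → ℝ)) :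
    minFace ξ (∑ j, Δ j) = ∑ j, minFace ξ (Δ j) := by
  ext x
  constructor
  · intro hx
    obtain ⟨g, hg, rfl⟩ := (Set.mem_fintype_sum _ _).1 hx.1
    exact (Set.mem_fintype_sum _ _).2 ⟨g, mem_minFace_of_sum_mem_minFace hg hx, rfl⟩
  · intro hx
    obtain ⟨g, hg, rfl⟩ := (Set.mem_fintype_sum _ _).1 hx
    refine ⟨(Set.mem_fintype_sum _ _).2 ⟨g, fun j => (hg j).1, rfl⟩, fun y hy => ?_⟩
    obtain ⟨h, hh, rfl⟩ := (Set.mem_fintype_sum _ _).1 hy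
    simp only [map_sum]
    exact Finset.sum_le_sum fun j _ => (hg j).2 _ (hh j)

theorem subset_minFace_of_sum_subset {ξ : (Fin n → ℝ) →ₗ[ℝ] ℝ} {Δ G : ι → Set (Fin n → ℝ)}
    (hGΔ : ∀ j, G j ⊆ Δ j) (hG : ∀ j, (G j).Nonempty)
    (h : ∑ j, G j ⊆ minFace ξ (∑ j, Δ j)) (j : ι) : G j ⊆ minFace ξ (Δ j) := by
  classical
  choose w hw using hG
  intro g hg
  have hupdate : ∀ k, Function.update w j g k ∈ G k := by
    intro k
    rcases eq_or_ne k j with rfl | hk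
    · simpa using hg
    · simpa [hk] using hw k
  simpa using mem_minFace_of_sum_mem_minFace (fun k => hGΔ k (hupdate k))
    (h ((Set.mem_fintype_sum _ _).2 ⟨_, hupdate, rfl⟩)) j

theorem minFace_sum_functional_subset {ξ : ι → (Fin n → ℝ) →ₗ[ℝ] ℝ} {P : Set (Fin n → ℝ)}
    {x : Fin n → ℝ} (hx : ∀ i, x ∈ minFace (ξ i) P) (i : ι) :
    minFace (∑ i, ξ i) P ⊆ minFace (ξ i) P := by
  intro z hz
  have hxz : ∀ k, ξ k x ≤ ξ k z := fun k => (hx k).2 z hz.1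
  have hsum : ∑ k, ξ k z ≤ ∑ k, ξ k x := by simpa using hz.2 x (hx i).1
  have heq := (Finset.sum_eq_sum_iff_of_le fun k _ => hxz k).1
    (le_antisymm (Finset.sum_le_sum fun k _ => hxz k) hsum) i (Finset.mem_univ i)
  exact ⟨hz.1, fun y hy => heq ▸ (hx i).2 y hy⟩

theorem mem_minFace_sum_functional {ξ : ι → (Fin n → ℝ) →ₗ[ℝ] ℝ} {P : Set (Fin n → ℝ)}
    {x : Fin n → ℝ} (hxP : x ∈ P) (hx : ∀ i, x ∈ minFace (ξ i) P) :
    x ∈ minFace (∑ i, ξ i) P :=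
  ⟨hxP, fun y hy => by simpa using Finset.sum_le_sum fun i _ => (hx i).2 y hy⟩

end MinFace

section MinkowskiSum

variable {n : ℕ} {ι : Type*} [Fintype ι]

theorem isFaceOf_singleton_sum {Δ : ι → Set (Fin n → ℝ)} {g : ι → Fin n → ℝ}
    (hg : ∀ j, g j ∈ Δ j)
    (hξ : ∀ j, ∃ ξ : (Fin n → ℝ) →ₗ[ℝ] ℝ,
      (∀ k, g k ∈ minFace ξ (Δ k)) ∧ (minFace ξ (Δ j)).Subsingleton) :
    IsFaceOf {∑ j, g j} (∑ j, Δ j) := by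
  choose ξ hξg hξs using hξ
  have hvertex : ∀ j, minFace (∑ i, ξ i) (Δ j) = {g j} := fun j =>
    ((hξs j).anti (minFace_sum_functional_subset (fun i => hξg i j) j)).eq_singleton_of_mem
      (mem_minFace_sum_functional (hg j) fun i => hξg i j)
  refine ⟨∑ i, ξ i, ?_⟩
  rw [minFace_sum, Finset.sum_congr rfl fun j _ => hvertex j, Set.finsetSum_singleton]

theorem minFace_eq_singleton_of_sum_eq {Δ G : ι → Set (Fin n → ℝ)}
    (hΔ : ∀ j, IsPolytope (Δ j)) {ξ : (Fin n → ℝ) →ₗ[ℝ] ℝ} (hG : ∀ j, IsFaceOf (G j) (Δ j))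
    (hsum : minFace ξ (∑ j, Δ j) = ∑ j, G j) {i : ι} {v : Fin n → ℝ} (hGi : G i = {v}) :
    minFace ξ (Δ i) = {v} :=
  eq_singleton_of_sum_eq_sum_of_subset
    (subset_minFace_of_sum_subset (fun j => (hG j).subset) (fun j => (hG j).nonempty (hΔ j))
      hsum.ge)
    (fun j => (hΔ j).minFace_nonempty ξ)
    (fun j => (hΔ j).isCompact.isBounded.subset (minFace_subset ξ _))
    (by rw [← minFace_sum, hsum]) hGi

end MinkowskiSum

section Characteristic

variable {n : ℕ} {Δ : Fin n → Set (Fin n → ℝ)}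

theorem summandIsVertex_minFace_iff (hΔ : ∀ j, IsPolytope (Δ j)) {ξ : (Fin n → ℝ) →ₗ[ℝ] ℝ}
    {i : Fin n} :
    SummandIsVertex Δ i (minFace ξ (∑ j, Δ j)) ↔ ∃ v, minFace ξ (Δ i) = {v} :=
  ⟨fun ⟨_, hG, hsum, v, hv⟩ => ⟨v, minFace_eq_singleton_of_sum_eq hΔ hG hsum hv⟩,
    fun ⟨v, hv⟩ => ⟨fun j => minFace ξ (Δ j), fun _ => ⟨ξ, rfl⟩, minFace_sum ξ Δ, v, hv⟩⟩

theorem IsCharacteristic.apply_eq_zero_iff {χ : (Fin n → ℝ) → (Fin n → ℝ)}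
    (hχ : IsCharacteristic Δ χ) (hΔ : ∀ j, IsPolytope (Δ j)) {x : Fin n → ℝ}
    (hx : x ∈ ∑ j, Δ j) (i : Fin n) :
    χ x i = 0 ↔ ∃ ξ, x ∈ minFace ξ (∑ j, Δ j) ∧ ∃ v, minFace ξ (Δ i) = {v} := by
  rw [hχ.2.2 i x hx]
  constructor
  · rintro ⟨_, ⟨ξ, rfl⟩, hvertex, hxΓ⟩
    exact ⟨ξ, hxΓ, (summandIsVertex_minFace_iff hΔ).1 hvertex⟩
  · rintro ⟨ξ, hxΓ, hvertex⟩
    exact ⟨_, ⟨ξ, rfl⟩, (summandIsVertex_minFace_iff hΔ).2 hvertex, hxΓ⟩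

end Characteristic

theorem characteristic_map_zero_set_general {n : ℕ}
    (Δ : Fin n → Set (Fin n → ℝ)) (hΔ : ∀ i, IsPolytope (Δ i))
    (χ : (Fin n → ℝ) → (Fin n → ℝ)) (hχ : IsCharacteristic Δ χ) :
    {x ∈ ∑ j, Δ j | χ x = 0} = {v | IsFaceOf {v} (∑ j, Δ j)} := by
  ext x
  constructor
  · rintro ⟨hx, hx0⟩
    obtain ⟨g, hg, rfl⟩ := (Set.mem_fintype_sum _ _).1 hx
    refine isFaceOf_singleton_sum hg fun j => ?_
    obtain ⟨ξ, hxξ, v, hv⟩ := (hχ.apply_eq_zero_iff hΔ hx j).1 (congrFun hx0 j)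
    exact ⟨ξ, mem_minFace_of_sum_mem_minFace hg hxξ, hv ▸ Set.subsingleton_singleton⟩
  · rintro ⟨ξ, hξ⟩
    have hx : x ∈ ∑ j, Δ j := minFace_subset ξ _ (hξ ▸ rfl)
    have hsub : (∑ j, minFace ξ (Δ j)).Subsingleton := by
      rw [← minFace_sum, ← hξ]
      exact Set.subsingleton_singleton
    refine ⟨hx, funext fun i => (hχ.apply_eq_zero_iff hΔ hx i).2 ⟨ξ, hξ ▸ rfl, ?_⟩⟩
    exact Set.exists_eq_singleton_iff_nonempty_subsingleton.2 ⟨(hΔ i).minFace_nonempty ξ,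
      subsingleton_of_sum_subsingleton (fun j => (hΔ j).minFace_nonempty ξ) hsub i⟩

/-- For polytopes in generic relative position, the zero set of a characteristic map
on the Minkowski sum `Δ` is exactly the set of vertices of `Δ`. -/
theorem characteristic_map_zero_set {n : ℕ}
    (Δ : Fin n → Set (Fin n → ℝ)) (hΔ : ∀ i, IsPolytope (Δ i))
    (hgen : GenericPosition Δ)
    (χ : (Fin n → ℝ) → (Fin n → ℝ)) (hχ : IsCharacteristic Δ χ) :
    {x ∈ ∑ j, Δ j | χ x = 0} = {v | IsFaceOf {v} (∑ j, Δ j)} :=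
  characteristic_map_zero_set_general Δ hΔ χ hχ
end

section
/- Let (x, y) ∈ (ℂ∖{0})² be a solution of the system f₁ = a₁₀x + a₀₁y + a₂₂x²y² = 0, f₂ = b₀₀ + b₁₂xy² + b₂₁x²y = 0, with a₁₀, a₂₂, b₂₁ ≠ 0. Then x satisfies x⁶ − [(a₀₁b₂₁(a₁₀b₁₂ + a₂₂b₀₀) − (a₁₀b₁₂ − a₂₂b₀₀)²)/(a₁₀a₂₂b₂₁²)]·x³ + a₀₁²b₀₀b₁₂/(a₁₀a₂₂b₂₁²) = 0. -/
/-- Elimination for the system `f₁ = a₁₀x + a₀₁y + a₂₂x²y² = 0`,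
`f₂ = b₀₀ + b₁₂xy² + b₂₁x²y = 0`: the `x`-coordinate of any solution in the torus
`(ℂ∖{0})²` satisfies the degree six equation
`x⁶ − [(a₀₁b₂₁(a₁₀b₁₂ + a₂₂b₀₀) − (a₁₀b₁₂ − a₂₂b₀₀)²)/(a₁₀a₂₂b₂₁²)]·x³
 + a₀₁²b₀₀b₁₂/(a₁₀a₂₂b₂₁²) = 0`. -/
theorem eliminant_for_x (a10 a01 a22 b00 b12 b21 x y : ℂ)
    (hx : x ≠ 0) (hy : y ≠ 0)
    (ha10 : a10 ≠ 0) (ha22 : a22 ≠ 0) (hb21 : b21 ≠ 0)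
    (hf1 : a10 * x + a01 * y + a22 * x ^ 2 * y ^ 2 = 0)
    (hf2 : b00 + b12 * x * y ^ 2 + b21 * x ^ 2 * y = 0) :
    x ^ 6 -
      ((a01 * b21 * (a10 * b12 + a22 * b00) - (a10 * b12 - a22 * b00) ^ 2) /
        (a10 * a22 * b21 ^ 2)) * x ^ 3 +
      a01 ^ 2 * b00 * b12 / (a10 * a22 * b21 ^ 2) = 0 := by
  have key : x * (a10 * a22 * b21 ^ 2 * x ^ 6 -
      (a01 * b21 * (a10 * b12 + a22 * b00) - (a10 * b12 - a22 * b00) ^ 2) * x ^ 3 +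
      a01 ^ 2 * b00 * b12) = 0 := by
    linear_combination
      (b12 * x * (a22 * b21 * x ^ 4 - a01 * b12 * x) * y +
        b21 * x ^ 2 * (a22 * b21 * x ^ 4 - a01 * b12 * x) -
        b12 * x * (a22 * b00 * x ^ 2 - a10 * b12 * x ^ 2)) * hf1 +
      (-(a22 * x ^ 2 * (a22 * b21 * x ^ 4 - a01 * b12 * x)) * y +
        a22 * x ^ 2 * (a22 * b00 * x ^ 2 - a10 * b12 * x ^ 2) -
        a01 * (a22 * b21 * x ^ 4 - a01 * b12 * x)) * hf2
  have key2 : a10 * a22 * b21 ^ 2 * x ^ 6 -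
      (a01 * b21 * (a10 * b12 + a22 * b00) - (a10 * b12 - a22 * b00) ^ 2) * x ^ 3 +
      a01 ^ 2 * b00 * b12 = 0 := by
    rcases mul_eq_zero.mp key with h | h
    · exact absurd h hx
    · exact h
  field_simp
  linear_combination key2
end
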